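/- arXiv:2406.04141 — 3 statements merged into one kernel-verified Lean document; each statement's English description precedes it below -/
import Mathlib

section
/- For the Coupon Collector Channel CC(n,k,R) with uniform input over all k-subsets of an n-element library, the conditional entropy H(X|Y) equals k^{-R} · Σ_{ℓ=1}^{min(k,R)} C(k,ℓ) · S(R,ℓ) · ℓ! · log₂ C(n-ℓ, k-ℓ). -/
/-!
Given the output `y`, let `T` be its set of values. Every `k`-set containing `T` explains `y`
equally well (with likelihood `k^{-R}`), so the posterior of `X` is uniform on the
`C(n-|T|, k-|T|)` such sets and `H(X|Y)` is the average of `log₂ C(n-|T|, k-|T|)`. For a fixed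
input `x`, the outputs with `|T| = ℓ` are counted by choosing `T ⊆ x` and then a surjection
`Fin R → T`, which gives `C(k,ℓ) · S(R,ℓ) · ℓ!` outputs.
-/

/-- Stirling numbers of the second kind. -/
def stirling2 : ℕ → ℕ → ℕ
  | 0, 0 => 0 + 1
  | 0, _ + 1 => 0
  | _ + 1, 0 => 0
  | n + 1, k + 1 => (k + 1) * stirling2 n (k + 1) + stirling2 n k

open Finset

theorem stirling2_eq_stirlingSecond : stirling2 = Nat.stirlingSecond := by
  funext n k
  induction n generalizing k with
  | zero => cases k <;> rfl
  | succ n ih => cases k <;> simp [stirling2, Nat.stirlingSecond_succ_succ, ih]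

theorem Real.mul_logb_div_mul_left (b a c : ℝ) :
    a * logb b (a / (a * c)) = -(a * logb b c) := by
  rcases eq_or_ne a 0 with rfl | ha
  · simp
  · rw [div_mul_cancel_left₀ ha, logb_inv, mul_neg]

section Surjections

variable {α : Type*} [DecidableEq α]

theorem Finset.image_univ_fin_cons {R : ℕ} (a : α) (g : Fin R → α) :
    image (Fin.cons a g : Fin (R + 1) → α) univ = insert a (image g univ) := by
  ext x; simp [Fin.exists_fin_succ, eq_comm]

theorem Finset.image_univ_subset_iff {β : Type*} [Fintype β] {y : β → α} {s : Finset α} :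
    image y univ ⊆ s ↔ ∀ i, y i ∈ s := by
  simp only [image_subset_iff, mem_univ, true_imp_iff]

theorem Finset.insert_eq_iff_of_mem {a : α} {s t : Finset α} (ha : a ∈ s) :
    insert a t = s ↔ t = s ∨ t = s.erase a := by
  constructor
  · rintro rfl
    by_cases hat : a ∈ t
    · exact .inl (insert_eq_self.2 hat).symm
    · exact .inr (erase_insert hat).symm
  · rintro (rfl | rfl)
    · exact insert_eq_self.2 ha
    · exact insert_erase ha

variable [Fintype α]

theorem card_filter_insert_image_univ_eq {R : ℕ} (a : α) (s : Finset α) :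
    #{g : Fin R → α | insert a (image g univ) = s} =
      if a ∈ s then
        #{g : Fin R → α | image g univ = s} + #{g : Fin R → α | image g univ = s.erase a}
      else 0 := by
  split_ifs with ha
  · rw [← card_union_of_disjoint, ← filter_or]
    · simp only [insert_eq_iff_of_mem ha]
    · exact disjoint_filter.2 fun g _ h h' => (erase_ne_self.2 ha) (h'.symm.trans h)
  · exact card_eq_zero.2 <| filter_eq_empty_iff.2 fun g _ h => ha (h ▸ mem_insert_self a _)

theorem card_filter_image_univ_fin_succ (R : ℕ) (s : Finset α) :
    #{f : Fin (R + 1) → α | image f univ = s} =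
      ∑ a ∈ s, (#{g : Fin R → α | image g univ = s} +
        #{g : Fin R → α | image g univ = s.erase a}) := by
  have hcons : #{p : α × (Fin R → α) | insert p.1 (image p.2 univ) = s} =
      #{f : Fin (R + 1) → α | image f univ = s} :=
    card_equiv (Fin.consEquiv fun _ => α) fun p => by
      simp only [mem_filter, mem_univ, true_and]
      exact Eq.to_iff <| congrArg (· = s) (image_univ_fin_cons p.1 p.2).symm
  rw [← hcons, card_filter, Fintype.sum_prod_type]
  refine (sum_congr rfl fun a _ => (card_filter _ _).symm).trans ?_
  simp only [card_filter_insert_image_univ_eq, sum_ite_mem, univ_inter]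

theorem card_filter_image_univ_eq (R : ℕ) (s : Finset α) :
    #{f : Fin R → α | image f univ = s} = Nat.stirlingSecond R #s * (#s).factorial := by
  induction R generalizing s with
  | zero =>
    rcases s.eq_empty_or_nonempty with rfl | hs
    · simp
    · rw [Nat.stirlingSecond_eq_zero_of_lt hs.card_pos, zero_mul, card_eq_zero,
        filter_eq_empty_iff]
      simpa [eq_comm] using hs.ne_empty
  | succ R ih =>
    rw [card_filter_image_univ_fin_succ,
      sum_congr rfl fun a ha => by rw [ih, ih, card_erase_of_mem ha], sum_const, smul_eq_mul]
    cases #s with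
    | zero => simp
    | succ m =>
      rw [Nat.stirlingSecond_succ_succ, Nat.add_sub_cancel, Nat.factorial_succ]
      ring

theorem sum_ite_forall_mem_eq_sum_range {M : Type*} [AddCommMonoid M] (R : ℕ) (x : Finset α)
    (g : ℕ → M) :
    ∑ y : Fin R → α, (if ∀ i, y i ∈ x then g #(image y univ) else 0) =
      ∑ m ∈ range (#x + 1), ((#x).choose m * Nat.stirlingSecond R m * m.factorial) • g m := by
  let F : Finset α → M := fun T => if T ⊆ x then g #T else 0
  calc ∑ y : Fin R → α, (if ∀ i, y i ∈ x then g #(image y univ) else 0)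
      = ∑ y : Fin R → α, F (image y univ) := by simp only [F, image_univ_subset_iff]
    _ = ∑ T, #{y : Fin R → α | image y univ = T} • F T := by
      rw [← sum_fiberwise' univ _ F]; simp only [sum_const]
    _ = ∑ T ∈ x.powerset, (Nat.stirlingSecond R #T * (#T).factorial) • g #T := by
      simp only [F, card_filter_image_univ_eq, smul_ite, smul_zero, ← sum_filter,
        filter_subset_univ]
    _ = _ := by
      rw [sum_powerset_apply_card fun m => (Nat.stirlingSecond R m * m.factorial) • g m]
      simp only [smul_smul, mul_assoc]

theorem sum_ite_forall_mem_eq_sum_Icc {M : Type*} [AddCommMonoid M] {R : ℕ} (hR : 0 < R)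
    {x : Finset α} {k : ℕ} (hx : #x = k) (g : ℕ → M) :
    ∑ y : Fin R → α, (if ∀ i, y i ∈ x then g #(image y univ) else 0) =
      ∑ m ∈ Icc 1 (min k R), (k.choose m * Nat.stirlingSecond R m * m.factorial) • g m := by
  rw [sum_ite_forall_mem_eq_sum_range, hx]
  refine (sum_subset (fun m hm => ?_) fun m hm hm' => ?_).symm
  · simp only [mem_Icc, mem_range] at hm ⊢
    omega
  · obtain rfl | hRm : m = 0 ∨ R < m := by simp only [mem_Icc, mem_range] at hm hm'; omega
    · rw [← Nat.succ_pred_eq_of_pos hR, Nat.stirlingSecond_succ_zero, mul_zero, zero_mul,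
        zero_smul]
    · simp [Nat.stirlingSecond_eq_zero_of_lt hRm]

end Surjections

theorem card_filter_subset_eq_choose {α : Type*} [Fintype α] [DecidableEq α] {k : ℕ}
    {T : Finset α} (hT : #T ≤ k) :
    #{x : {x : Finset α // #x = k} | T ⊆ x.1} = (Fintype.card α - #T).choose (k - #T) := by
  rw [← card_compl, ← card_powersetCard]
  have hdisj {u : Finset α} (hu : u ∈ powersetCard (k - #T) Tᶜ) : Disjoint u T :=
    subset_compl_iff_disjoint_right.mp (mem_powersetCard.1 hu).1
  refine card_bij' (fun x _ => x.1 \ T)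
    (fun u hu => ⟨u ∪ T, ?_⟩) (fun x hx => ?_) (fun u hu => ?_) (fun x hx => ?_) (fun u hu => ?_)
  · rw [card_union_of_disjoint (hdisj hu), (mem_powersetCard.1 hu).2, Nat.sub_add_cancel hT]
  · rw [mem_filter] at hx
    rw [mem_powersetCard, card_sdiff_of_subset hx.2, x.2, sdiff_eq_inter_compl]
    exact ⟨inter_subset_right, rfl⟩
  · simp
  · rw [mem_filter] at hx
    exact Subtype.ext (sdiff_union_of_subset hx.2)
  · exact union_sdiff_cancel_right (hdisj hu)

theorem stmt5_general (n k R : ℕ) (hkn : k < n) (hR : 0 < R)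
    (joint : {x : Finset (Fin n) // x.card = k} → (Fin R → Fin n) → ℝ)
    (hjoint : ∀ x y, joint x y =
      (1 / (n.choose k : ℝ)) * (if ∀ i, y i ∈ x.1 then ((k : ℝ) ^ R)⁻¹ else 0)) :
    -(∑ x : {x : Finset (Fin n) // x.card = k}, ∑ y : Fin R → Fin n,
        joint x y * Real.logb 2 (joint x y / ∑ x' : {x : Finset (Fin n) // x.card = k}, joint x' y))
      = ((k : ℝ) ^ R)⁻¹ *
          ∑ ℓ ∈ Finset.Icc 1 (min k R),
            (k.choose ℓ * stirling2 R ℓ * ℓ.factorial : ℝ) *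
              Real.logb 2 (((n - ℓ).choose (k - ℓ) : ℝ)) := by
  set a : ℝ := 1 / (n.choose k : ℝ) * ((k : ℝ) ^ R)⁻¹
  set L : ℕ → ℝ := fun ℓ => Real.logb 2 ((n - ℓ).choose (k - ℓ))
  have hmarg (x : {x : Finset (Fin n) // x.card = k}) (y : Fin R → Fin n) (h : ∀ i, y i ∈ x.1) :
      ∑ x', joint x' y = a * ((n - #(image y univ)).choose (k - #(image y univ)) : ℕ) := by
    have hT : #(image y univ) ≤ k := x.2 ▸ card_le_card (image_univ_subset_iff.2 h)
    simp only [hjoint, ← mul_sum, ← sum_filter, sum_const, ← image_univ_subset_iff,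
      card_filter_subset_eq_choose hT, Fintype.card_fin, nsmul_eq_mul, a]
    ring
  have hterm (x : {x : Finset (Fin n) // x.card = k}) (y : Fin R → Fin n) :
      joint x y * Real.logb 2 (joint x y / ∑ x', joint x' y) =
        -if ∀ i, y i ∈ x.1 then a * L #(image y univ) else 0 := by
    by_cases h : ∀ i, y i ∈ x.1
    · rw [hmarg x y h, hjoint, if_pos h, if_pos h]
      exact Real.mul_logb_div_mul_left _ _ _
    · simp [hjoint, h]
  have hinner (x : {x : Finset (Fin n) // x.card = k}) :=
    sum_ite_forall_mem_eq_sum_Icc (M := ℝ) (R := R) hR x.2 fun ℓ => a * L ℓ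
  have hC : (n.choose k : ℝ) ≠ 0 := Nat.cast_ne_zero.2 (Nat.choose_pos hkn.le).ne'
  simp only [hterm, sum_neg_distrib, neg_neg, hinner, sum_const, card_univ,
    Fintype.card_finset_len, Fintype.card_fin, stirling2_eq_stirlingSecond, nsmul_eq_mul, mul_sum]
  refine sum_congr rfl fun m _ => ?_
  simp only [a, L]
  push_cast
  field_simp

/-- Conditional entropy `H(X|Y)` of the Coupon Collector Channel `CC(n,k,R)` with uniform
input over all `k`-subsets of an `n`-element library: it equals
`k^(-R) · Σ_ℓ C(k,ℓ)·S(R,ℓ)·ℓ!·log₂ C(n-ℓ,k-ℓ)`. -/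
theorem stmt5 (n k R : ℕ) (hk : 0 < k) (hkn : k < n) (hR : 0 < R)
    (joint : {x : Finset (Fin n) // x.card = k} → (Fin R → Fin n) → ℝ)
    (hjoint : ∀ x y, joint x y =
      (1 / (n.choose k : ℝ)) * (if ∀ i, y i ∈ x.1 then ((k : ℝ) ^ R)⁻¹ else 0)) :
    -(∑ x : {x : Finset (Fin n) // x.card = k}, ∑ y : Fin R → Fin n,
        joint x y * Real.logb 2 (joint x y / ∑ x' : {x : Finset (Fin n) // x.card = k}, joint x' y))
      = ((k : ℝ) ^ R)⁻¹ *
          ∑ ℓ ∈ Finset.Icc 1 (min k R),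
            (k.choose ℓ * stirling2 R ℓ * ℓ.factorial : ℝ) *
              Real.logb 2 (((n - ℓ).choose (k - ℓ) : ℝ)) :=
  stmt5_general n k R hkn hR joint hjoint
end

section
/- In the Coupon Collector Channel CC(n,k,R), for every k-subset x of the library and every ℓ ∈ {1,…,min(k,R)}, the number of output sequences with exactly ℓ distinct motifs compatible with x is C(k,ℓ)·S(R,ℓ)·ℓ!, independent of x; and for every output sequence y with ℓ distinct motifs, the number of compatible inputs is C(n-ℓ,k-ℓ), independent of y. Hence the channel restricted to outputs with ℓ distinct motifs has a transition matrix whose rows are permutations of each other and whose columns are permutations of each other. -/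
/-!
An input `x` and an output `y` are compatible iff the image `T` of `y` lies in `x`. Sorting the
compatible outputs with `ℓ` distinct motifs by their image, there are `C(k,ℓ)` choices of `T ⊆ x`,
and the outputs with image exactly `T` are the surjections `Fin R → T`, of which there are
`S(R,ℓ)·ℓ!` (split on the first letter: either the tail is already onto `T`, or it is onto `T`
minus that letter). Dually, the inputs compatible with `y` are the `k`-sets `x ⊇ T`, determined by
the `(k-ℓ)`-set `x \ T` in the complement of `T`.
-/

open Function Finset
open scoped Nat

variable {α β : Type*}

lemma Set.insert_eq_univ_iff {s : Set β} {v : β} :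
    insert v s = Set.univ ↔ s = Set.univ ∨ s = {v}ᶜ := by
  by_cases hv : v ∈ s
  · have : s ≠ {v}ᶜ := fun h => by simp [h] at hv
    simp [Set.insert_eq_of_mem hv, this]
  · have : s ≠ Set.univ := fun h => by simp [h] at hv
    rw [Set.insert_eq, ← Set.compl_subset_iff_union, or_iff_right this]
    exact ⟨fun h => (Set.subset_compl_singleton_iff.2 hv).antisymm h, fun h => h.ge⟩

def rangeEqEquivSurjective (s : Set β) :
    {f : α → β // Set.range f = s} ≃ {g : α → s // Surjective g} where
  toFun f := ⟨s.codRestrict f.1 fun a => f.2.subset ⟨a, rfl⟩, (Set.surjective_codRestrict _).2 f.2⟩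
  invFun g := ⟨Subtype.val ∘ g.1, by
    rw [Set.range_comp, g.2.range_eq, Set.image_univ, Subtype.range_coe]⟩
  left_inv _ := rfl
  right_inv _ := rfl

lemma surjective_cons_iff {n : ℕ} (v : β) (g : Fin n → β) :
    Surjective (Fin.cons v g : Fin (n + 1) → β) ↔ Surjective g ∨ Set.range g = {v}ᶜ := by
  simp only [← Set.range_eq_univ, Fin.range_cons, Set.insert_eq_univ_iff]

lemma card_subtype_fin_succ {R : ℕ} [Fintype β] (P : (Fin (R + 1) → β) → Prop)
    [DecidablePred P] :
    Fintype.card {f // P f} = ∑ v, Fintype.card {g : Fin R → β // P (Fin.cons v g)} := by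
  rw [← Fintype.card_sigma]
  exact Fintype.card_congr ((Equiv.subtypeEquivOfSubtype (Fin.consEquiv fun _ => β)).symm.trans
    (Equiv.subtypeProdEquivSigmaSubtype fun v g => P (Fin.cons v g)))

theorem card_surjective_fin (R : ℕ) (β : Type*) [Fintype β] [DecidableEq β] :
    Fintype.card {f : Fin R → β // Surjective f} =
      stirling2 R (Fintype.card β) * (Fintype.card β)! := by
  classical
  induction R generalizing β with
  | zero =>
    cases hβ : Fintype.card β with
    | zero =>
      have : IsEmpty β := Fintype.card_eq_zero_iff.1 hβ
      rw [Fintype.card_congr (Equiv.subtypeUnivEquiv fun f => isEmptyElim)]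
      simp [stirling2]
    | succ m =>
      obtain ⟨b⟩ : Nonempty β := Fintype.card_pos_iff.1 (by omega)
      rw [Fintype.card_eq_zero_iff.2 ⟨fun f => (f.2 b).choose.elim0⟩]
      simp [stirling2]
  | succ R ih =>
    cases hβ : Fintype.card β with
    | zero =>
      have : IsEmpty β := Fintype.card_eq_zero_iff.1 hβ
      rw [Fintype.card_eq_zero_iff.2 ⟨fun f => isEmptyElim (f.1 0)⟩]
      simp [stirling2]
    | succ m =>
      have fiber (v : β) :
          Fintype.card {g : Fin R → β // Surjective (Fin.cons v g : Fin (R + 1) → β)} =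
            stirling2 R (m + 1) * (m + 1)! + stirling2 R m * m ! := by
        have disj : Disjoint (fun g : Fin R → β => Surjective g) (Set.range · = {v}ᶜ) :=
          disjoint_iff_inf_le.2 fun g ⟨hs, hr⟩ => hr.subset (hs v) rfl
        rw [Fintype.card_congr (Equiv.subtypeEquivRight fun g => surjective_cons_iff v g),
          Fintype.card_subtype_or_disjoint _ _ disj, ih, hβ,
          Fintype.card_congr (rangeEqEquivSurjective _), ih, Fintype.card_compl_set,
          Set.card_singleton, hβ, Nat.add_sub_cancel]
      rw [card_subtype_fin_succ, sum_congr rfl fun v _ => fiber v, sum_const, card_univ, hβ,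
        smul_eq_mul, stirling2, Nat.factorial_succ]
      ring

theorem card_surjective (α β : Type*) [Fintype α] [DecidableEq α] [Fintype β] [DecidableEq β] :
    Fintype.card {f : α → β // Surjective f} =
      stirling2 (Fintype.card α) (Fintype.card β) * (Fintype.card β)! := by
  rw [← card_surjective_fin]
  exact Fintype.card_congr <| (Equiv.arrowCongr (Fintype.equivFin α) (Equiv.refl β)).subtypeEquiv
    fun f => (Equiv.surjective_comp _ f).symm

theorem card_image_univ_eq [Fintype α] [DecidableEq α] [Fintype β] [DecidableEq β]
    (T : Finset β) :
    Fintype.card {f : α → β // image f univ = T} = stirling2 (Fintype.card α) #T * (#T)! := by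
  have image_eq_iff (f : α → β) : image f univ = T ↔ Set.range f = T := by
    rw [← coe_inj, coe_image, coe_univ, Set.image_univ]
  rw [Fintype.card_congr ((Equiv.subtypeEquivRight image_eq_iff).trans
    (rangeEqEquivSurjective (T : Set β))), card_surjective]
  simp only [coe_sort_coe, Fintype.card_coe]

theorem card_forall_mem_card_image_eq [Fintype α] [DecidableEq α] [Fintype β] [DecidableEq β]
    (x : Finset β) (ℓ : ℕ) :
    Fintype.card {f : α → β // (∀ i, f i ∈ x) ∧ #(image f univ) = ℓ} =
      (#x).choose ℓ * (stirling2 (Fintype.card α) ℓ * ℓ !) := by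
  rw [Fintype.card_subtype,
    card_eq_sum_card_fiberwise (f := (image · univ)) (t := x.powersetCard ℓ)]
  · rw [sum_congr rfl fun T hT => ?_, sum_const, card_powersetCard, smul_eq_mul]
    rw [mem_powersetCard] at hT
    rw [← hT.2, ← card_image_univ_eq, Fintype.card_subtype]
    congr 1
    ext f
    simp only [mem_filter, mem_univ, true_and]
    exact ⟨And.right, fun h => ⟨⟨fun i => hT.1 (h ▸ mem_image_of_mem f (mem_univ i)), h ▸ rfl⟩, h⟩⟩
  · intro f hf
    simp only [coe_filter, Set.mem_ofPred_eq, mem_univ, true_and] at hf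
    rw [mem_coe, mem_powersetCard, image_subset_iff]
    exact ⟨fun i _ => hf.1 i, hf.2⟩

theorem card_supersets_card_eq [Fintype α] [DecidableEq α] (T : Finset α) {k : ℕ} (hk : #T ≤ k) :
    Fintype.card {x : Finset α // #x = k ∧ T ⊆ x} = (Fintype.card α - #T).choose (k - #T) := by
  rw [Fintype.card_subtype, ← card_compl, ← card_powersetCard]
  refine card_nbij' (· \ T) (· ∪ T) ?_ ?_ ?_ ?_
  · intro x hx
    simp only [coe_filter, Set.mem_ofPred_eq, mem_univ, true_and] at hx
    rw [mem_coe, mem_powersetCard, card_sdiff_of_subset hx.2, hx.1]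
    exact ⟨le_compl_iff_disjoint_right.2 disjoint_sdiff_self_left, rfl⟩
  · intro s hs
    rw [mem_coe, mem_powersetCard, le_compl_iff_disjoint_right] at hs
    simp only [coe_filter, Set.mem_ofPred_eq, mem_univ, true_and]
    rw [card_union_of_disjoint hs.1, hs.2, Nat.sub_add_cancel hk]
    exact ⟨rfl, subset_union_right⟩
  · intro x hx
    simp only [coe_filter, Set.mem_ofPred_eq, mem_univ, true_and] at hx
    exact sdiff_union_of_subset hx.2
  · intro s hs
    rw [mem_coe, mem_powersetCard, le_compl_iff_disjoint_right] at hs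
    exact union_sdiff_cancel_right hs.1

theorem stmt8_general (n k R ℓ : ℕ) (hℓ2 : ℓ ≤ min k R) :
    (∀ x : Finset (Fin n), x.card = k →
        Fintype.card {y : Fin R → Fin n //
            (∀ i, y i ∈ x) ∧ (Finset.image y Finset.univ).card = ℓ}
          = k.choose ℓ * stirling2 R ℓ * ℓ.factorial) ∧
    (∀ y : Fin R → Fin n, (Finset.image y Finset.univ).card = ℓ →
        Fintype.card {x : Finset (Fin n) // x.card = k ∧ ∀ i, y i ∈ x}
          = (n - ℓ).choose (k - ℓ)) := by
  refine ⟨fun x hx => ?_, fun y hy => ?_⟩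
  · -- `convert` reconciles the instances `Nat.decidableForallFin` and `decidableForallFintype`
    calc _ = (#x).choose ℓ * (stirling2 (Fintype.card (Fin R)) ℓ * ℓ !) := by
          convert card_forall_mem_card_image_eq (α := Fin R) x ℓ
      _ = _ := by rw [hx, Fintype.card_fin, mul_assoc]
  · have hℓk : #(image y univ) ≤ k := hy.trans_le (hℓ2.trans (min_le_left k R))
    have mem_iff_image_subset (x : Finset (Fin n)) : (∀ i, y i ∈ x) ↔ image y univ ⊆ x := by
      simp [image_subset_iff]
    rw [Fintype.card_congr
        (Equiv.subtypeEquivRight fun x => and_congr_right' (mem_iff_image_subset x)),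
      card_supersets_card_eq _ hℓk, hy, Fintype.card_fin]

/-- Symmetry counts for the Coupon Collector Channel: every input `x` is compatible with
exactly `C(k,ℓ)·S(R,ℓ)·ℓ!` outputs having `ℓ` distinct motifs, and every output `y` with
`ℓ` distinct motifs is compatible with exactly `C(n-ℓ,k-ℓ)` inputs; hence in the transition
matrix restricted to outputs with `ℓ` distinct motifs, rows are permutations of each other
and columns are permutations of each other. -/
theorem stmt8 (n k R ℓ : ℕ) (hk : 0 < k) (hkn : k < n) (hR : 0 < R)
    (hℓ1 : 1 ≤ ℓ) (hℓ2 : ℓ ≤ min k R) :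
    (∀ x : Finset (Fin n), x.card = k →
        Fintype.card {y : Fin R → Fin n //
            (∀ i, y i ∈ x) ∧ (Finset.image y Finset.univ).card = ℓ}
          = k.choose ℓ * stirling2 R ℓ * ℓ.factorial) ∧
    (∀ y : Fin R → Fin n, (Finset.image y Finset.univ).card = ℓ →
        Fintype.card {x : Finset (Fin n) // x.card = k ∧ ∀ i, y i ∈ x}
          = (n - ℓ).choose (k - ℓ)) :=
  stmt8_general n k R ℓ hℓ2
end

section
/- For the interference-free split-library channel, the capacity satisfies C_{a×CC}(R) = a · Σ_{r=0}^{R} C_CC(ñ,k̃,r) · C(R,r) · (1/a)^r · (1 − 1/a)^{R−r} ≤ a · C_CC(ñ, k̃, R) for all R, with C_CC nondecreasing in its read argument. -/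
/-- Capacity of the interference-free Coupon Collector Channel with library size `n`,
symbol weight `k`, and `r` reads (equal to `0` when `r = 0`). -/
noncomputable def Ccc (n k r : ℕ) : ℝ :=
  if r = 0 then 0
  else
    Real.logb 2 (n.choose k) -
      ((k : ℝ) ^ r)⁻¹ *
        ∑ ℓ ∈ Finset.Icc 1 (min k r),
          (k.choose ℓ * stirling2 r ℓ * ℓ.factorial : ℝ) *
            Real.logb 2 (((n - ℓ).choose (k - ℓ) : ℝ))

lemma stirling2_eq_zero_of_lt : ∀ {n k : ℕ}, n < k → stirling2 n k = 0
  | 0, _ + 1, _ => rfl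
  | n + 1, k + 1, h => by
      rw [stirling2, stirling2_eq_zero_of_lt (by omega : n < k + 1),
        stirling2_eq_zero_of_lt (by omega : n < k), mul_zero]

lemma stirling2_succ_zero (n : ℕ) : stirling2 (n + 1) 0 = 0 := rfl

lemma monotone_logb_natCast {b : ℝ} (hb : 1 < b) : Monotone fun m : ℕ => Real.logb b m := by
  intro m m' h
  rcases Nat.eq_zero_or_pos m with rfl | hm
  · rcases Nat.eq_zero_or_pos m' with rfl | hm'
    · rfl
    · simpa using Real.logb_nonneg hb (by exact_mod_cast hm')
  · exact Real.logb_le_logb_of_le hb (by exact_mod_cast hm) (by exact_mod_cast h)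

noncomputable def logbChooseSub (n k ℓ : ℕ) : ℝ :=
  Real.logb 2 ((n - ℓ).choose (k - ℓ))

lemma logbChooseSub_succ_le {n k m : ℕ} (hkn : k ≤ n) (hm : m < k) :
    logbChooseSub n k (m + 1) ≤ logbChooseSub n k m := by
  apply monotone_logb_natCast one_lt_two
  rw [show n - m = n - (m + 1) + 1 by omega, show k - m = k - (m + 1) + 1 by omega,
    Nat.choose_succ_succ]
  exact Nat.le_add_right _ _

noncomputable def stirlingLogbSum (n k r : ℕ) : ℝ :=
  ∑ ℓ ∈ Finset.range (k + 1), (k.descFactorial ℓ * stirling2 r ℓ : ℝ) * logbChooseSub n k ℓ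

lemma stirlingLogbSum_zero (n k : ℕ) : stirlingLogbSum n k 0 = logbChooseSub n k 0 := by
  rw [stirlingLogbSum, Finset.sum_eq_single 0]
  · simp [stirling2]
  · intro ℓ _ hℓ
    simp [stirling2_eq_zero_of_lt (Nat.pos_of_ne_zero hℓ)]
  · simp

lemma Ccc_eq_sub_stirlingLogbSum (n k r : ℕ) :
    Ccc n k r = logbChooseSub n k 0 - ((k : ℝ) ^ r)⁻¹ * stirlingLogbSum n k r := by
  rcases r with _ | r
  · simp [Ccc, stirlingLogbSum_zero]
  rw [Ccc, if_neg r.succ_ne_zero, stirlingLogbSum]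
  congr 2
  calc _ = ∑ ℓ ∈ Finset.Icc 1 (min k (r + 1)),
          (k.descFactorial ℓ * stirling2 (r + 1) ℓ : ℝ) * logbChooseSub n k ℓ := by
        refine Finset.sum_congr rfl fun ℓ _ => ?_
        rw [Nat.descFactorial_eq_factorial_mul_choose, logbChooseSub]
        push_cast
        ring
    _ = _ := by
        refine Finset.sum_subset (fun ℓ hℓ => ?_) (fun ℓ hℓk hℓ => ?_)
        · simp only [Finset.mem_Icc, Finset.mem_range] at hℓ ⊢
          omega
        · rcases Nat.eq_zero_or_pos ℓ with rfl | hℓ0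
          · simp [stirling2_succ_zero]
          · have : r + 1 < ℓ := by simp only [Finset.mem_Icc, Finset.mem_range] at hℓ hℓk; omega
            simp [stirling2_eq_zero_of_lt this]

lemma stirlingLogbSum_succ_le {n k : ℕ} (hkn : k ≤ n) (r : ℕ) :
    stirlingLogbSum n k (r + 1) ≤ k * stirlingLogbSum n k r := by
  set c : ℕ → ℝ := fun ℓ => k.descFactorial ℓ * stirling2 r ℓ
  set g := logbChooseSub n k
  have hrec (m : ℕ) : (k.descFactorial (m + 1) * stirling2 (r + 1) (m + 1) : ℝ) =
      (m + 1) * c (m + 1) + (k - m : ℕ) * c m := by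
    simp only [c]
    rw [stirling2, Nat.descFactorial_succ]
    push_cast
    ring
  calc stirlingLogbSum n k (r + 1)
      = ∑ m ∈ Finset.range k, ((m + 1) * c (m + 1) + (k - m : ℕ) * c m) * g (m + 1) := by
        rw [stirlingLogbSum, Finset.sum_range_succ', stirling2_succ_zero]
        simp only [hrec, Nat.cast_zero, mul_zero, zero_mul, add_zero, g]
    _ ≤ ∑ m ∈ Finset.range k, ((m + 1) * c (m + 1) * g (m + 1) + (k - m : ℕ) * c m * g m) := by
        refine Finset.sum_le_sum fun m hm => ?_
        have hcm : 0 ≤ (k - m : ℕ) * c m := by simp only [c]; positivity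
        have := mul_le_mul_of_nonneg_left
          (logbChooseSub_succ_le hkn (Finset.mem_range.mp hm)) hcm
        linarith
    _ = ∑ ℓ ∈ Finset.range (k + 1), ℓ * c ℓ * g ℓ +
          ∑ ℓ ∈ Finset.range (k + 1), (k - ℓ : ℕ) * c ℓ * g ℓ := by
        rw [Finset.sum_add_distrib, Finset.sum_range_succ' (fun ℓ : ℕ => ℓ * c ℓ * g ℓ),
          Finset.sum_range_succ (fun ℓ => (k - ℓ : ℕ) * c ℓ * g ℓ)]
        simp
    _ = k * stirlingLogbSum n k r := by
        rw [← Finset.sum_add_distrib, stirlingLogbSum, Finset.mul_sum]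
        refine Finset.sum_congr rfl fun ℓ hℓ => ?_
        rw [Nat.cast_sub (Nat.lt_succ_iff.mp (Finset.mem_range.mp hℓ))]
        ring

lemma Ccc_monotone {n k : ℕ} (hk : 0 < k) (hkn : k ≤ n) : Monotone (Ccc n k) := by
  refine monotone_nat_of_le_succ fun r => ?_
  rw [Ccc_eq_sub_stirlingLogbSum, Ccc_eq_sub_stirlingLogbSum]
  suffices ((k : ℝ) ^ (r + 1))⁻¹ * stirlingLogbSum n k (r + 1) ≤
      ((k : ℝ) ^ r)⁻¹ * stirlingLogbSum n k r by linarith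
  have hk' : (k : ℝ) ≠ 0 := by exact_mod_cast hk.ne'
  calc _ ≤ ((k : ℝ) ^ (r + 1))⁻¹ * (k * stirlingLogbSum n k r) := by
        gcongr
        exact stirlingLogbSum_succ_le hkn r
    _ = _ := by
        rw [pow_succ]
        field_simp

lemma sum_mul_choose_mul_pow_mul_pow_le {f : ℕ → ℝ} {p : ℝ} (hp0 : 0 ≤ p) (hp1 : p ≤ 1) {R : ℕ}
    (hf : ∀ r ≤ R, f r ≤ f R) :
    ∑ r ∈ Finset.range (R + 1), f r * R.choose r * p ^ r * (1 - p) ^ (R - r) ≤ f R := by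
  have hsum : ∑ r ∈ Finset.range (R + 1), p ^ r * (1 - p) ^ (R - r) * R.choose r = 1 := by
    rw [← add_pow, add_sub_cancel, one_pow]
  calc _ ≤ ∑ r ∈ Finset.range (R + 1), f R * (p ^ r * (1 - p) ^ (R - r) * R.choose r) := by
        refine Finset.sum_le_sum fun r hr => ?_
        have hw : 0 ≤ p ^ r * (1 - p) ^ (R - r) * R.choose r :=
          mul_nonneg (mul_nonneg (pow_nonneg hp0 _) (pow_nonneg (sub_nonneg.mpr hp1) _))
            (Nat.cast_nonneg _)
        have := mul_le_mul_of_nonneg_right (hf r (Nat.lt_succ_iff.mp (Finset.mem_range.mp hr))) hw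
        linarith
    _ = f R := by rw [← Finset.mul_sum, hsum, mul_one]

theorem stmt19_general (a nt kt : ℕ) (hkt : 0 < kt) (hktn : kt < nt) :
    (∀ r r' : ℕ, r ≤ r' → Ccc nt kt r ≤ Ccc nt kt r') ∧
    (∀ R : ℕ,
      (a : ℝ) * ∑ r ∈ Finset.range (R + 1),
          Ccc nt kt r * (R.choose r : ℝ) * (1 / (a : ℝ)) ^ r * (1 - 1 / (a : ℝ)) ^ (R - r)
        ≤ (a : ℝ) * Ccc nt kt R) := by
  have hmono := Ccc_monotone hkt hktn.le
  refine ⟨fun r r' h => hmono h, fun R => ?_⟩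
  have hp1 : 1 / (a : ℝ) ≤ 1 := by simpa using Nat.cast_inv_le_one a
  gcongr
  exact sum_mul_choose_mul_pow_mul_pow_le (by positivity) hp1 fun r hr => hmono hr

/-- Library-splitting capacity: `Ccc` is nondecreasing in the number of reads, and the
split-library capacity `a · Σ_r Ccc(ñ,k̃,r)·C(R,r)·(1/a)^r·(1−1/a)^(R−r)` is at most
`a · Ccc(ñ,k̃,R)` for all `R`. -/
theorem stmt19 (a nt kt : ℕ) (ha : 1 ≤ a) (hkt : 0 < kt) (hktn : kt < nt) :
    (∀ r r' : ℕ, r ≤ r' → Ccc nt kt r ≤ Ccc nt kt r') ∧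
    (∀ R : ℕ,
      (a : ℝ) * ∑ r ∈ Finset.range (R + 1),
          Ccc nt kt r * (R.choose r : ℝ) * (1 / (a : ℝ)) ^ r * (1 - 1 / (a : ℝ)) ^ (R - r)
        ≤ (a : ℝ) * Ccc nt kt R) :=
  stmt19_general a nt kt hkt hktn
end
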